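/- arXiv:1701.02299 — 5 statements merged into one kernel-verified Lean document; each statement's English description precedes it below -/
import Mathlib

section
/- Let 1 ≤ k < n be integers. For any nonempty set of codes E ⊆ ℝ^{(k+1)(n−k)}, the union of the corresponding k-dimensional affine subspaces satisfies dim(⋃_{x∈E} P(x)) ≤ k + dim E. -/
open scoped ENNReal

/-- For a code `x = (a, b¹, …, bᵏ)`, the `k`-dimensional affine subspace
`P(x) = {(t, a + t₁b¹ + ⋯ + t_k bᵏ) : t ∈ ℝᵏ}` of `ℝⁿ ≅ ℝᵏ × ℝ^{n-k}` in graph form. -/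
def affGraph (n k : ℕ) (x : (Fin (n - k) → ℝ) × (Fin k → Fin (n - k) → ℝ)) :
    Set ((Fin k → ℝ) × (Fin (n - k) → ℝ)) :=
  {p | ∃ t : Fin k → ℝ, p = (t, x.1 + ∑ i, t i • x.2 i)}

/-!
The union is the image of `ℝᵏ × E` under the smooth map `(t, a, b) ↦ (t, a + ∑ tᵢ bᵢ)`, and `C¹`
maps do not increase Hausdorff dimension, so it suffices to show `dim (ℝᵏ × E) ≤ k + dim E`. By
countable stability and translation invariance, `ℝᵏ` may be replaced by the unit cube. If
`μH[d] E = 0`, cover `E` by sets `Uⱼ` with `diam Uⱼ ≤ σⱼ`, `σⱼ > 0` (enlarge by a summable positive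
sequence where `diam Uⱼ = 0`) and `∑ σⱼᵈ` small. The unit cube is covered by
`(⌈σⱼ⁻¹⌉ + 1)ᵏ ≤ (3 / σⱼ)ᵏ` grid cubes of side `σⱼ`, whose products with `Uⱼ` have diameter at most
`σⱼ` in the sup metric; their `(k + d)`-sum is therefore at most `3ᵏ ∑ σⱼᵈ`, and
`μH[k + d] ([0, 1]ᵏ × E) = 0`.
-/

open Set Metric MeasureTheory Filter
open scoped NNReal Topology

theorem ediam_prod_le {α β : Type*} [PseudoEMetricSpace α] [PseudoEMetricSpace β]
    (s : Set α) (t : Set β) : ediam (s ×ˢ t) ≤ max (ediam s) (ediam t) :=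
  ediam_le_iff.2 fun _ hp _ hq =>
    max_le_max (edist_le_ediam_of_mem hp.1 hq.1) (edist_le_ediam_of_mem hp.2 hq.2)

theorem exists_cover_tsum_ediam_rpow_lt {X : Type*} [EMetricSpace X] [MeasurableSpace X]
    [BorelSpace X] {d : ℝ} (hd : 0 < d) {s : Set X} (hs : μH[d] s = 0) {δ : ℝ≥0∞} (hδ : 0 < δ) :
    ∃ U : ℕ → Set X, s ⊆ ⋃ j, U j ∧ ∑' j, ediam (U j) ^ d < δ := by
  have h : (⨅ (U : ℕ → Set X) (_ : s ⊆ ⋃ j, U j) (_ : ∀ j, ediam (U j) ≤ ⊤),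
      ∑' j, ⨆ _ : (U j).Nonempty, ediam (U j) ^ d) < δ := by
    refine lt_of_le_of_lt ?_ (hs ▸ hδ)
    rw [Measure.hausdorffMeasure_apply]
    exact le_iSup₂_of_le (⊤ : ℝ≥0∞) ENNReal.zero_lt_top le_rfl
  simp only [iInf_lt_iff] at h
  obtain ⟨U, hcov, -, hsum⟩ := h
  refine ⟨U, hcov, lt_of_le_of_lt (ENNReal.tsum_le_tsum fun j => ?_) hsum⟩
  rcases (U j).eq_empty_or_nonempty with h | h
  · simp [h, ENNReal.zero_rpow_of_pos hd]
  · exact le_iSup (fun _ : (U j).Nonempty => ediam (U j) ^ d) h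

theorem exists_cover_pos_radii {X : Type*} [EMetricSpace X] [MeasurableSpace X]
    [BorelSpace X] {d : ℝ} (hd : 0 < d) {s : Set X} (hs : μH[d] s = 0) {ρ : ℝ≥0} (hρ : 0 < ρ) :
    ∃ (U : ℕ → Set X) (σ : ℕ → ℝ≥0), s ⊆ ⋃ j, U j ∧
      (∀ j, 0 < σ j ∧ σ j ≤ ρ ∧ ediam (U j) ≤ σ j) ∧ ∑' j, (σ j : ℝ≥0∞) ^ d ≤ (ρ : ℝ≥0∞) ^ d := by
  have hρd : (ρ : ℝ≥0∞) ^ d / 2 ≠ 0 := by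
    simp [ENNReal.div_eq_zero_iff, hρ.ne']
  obtain ⟨U, hcov, hU⟩ := exists_cover_tsum_ediam_rpow_lt hd hs (pos_iff_ne_zero.2 hρd)
  obtain ⟨ε, hε, hεsum⟩ := ENNReal.exists_pos_sum_of_countable hρd ℕ
  have hUtop : ∀ j, ediam (U j) ≠ ⊤ := fun j h => by
    have := (ENNReal.le_tsum j).trans_lt hU
    simp [h, hd] at this
  set σ : ℕ → ℝ≥0 := fun j => max (ediam (U j)).toNNReal (ε j ^ d⁻¹)
  have hσd : ∀ j, (σ j : ℝ≥0∞) ^ d ≤ ediam (U j) ^ d + ε j := fun j => by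
    rw [ENNReal.coe_max, ENNReal.max_rpow hd.le, ENNReal.coe_toNNReal (hUtop j),
      ENNReal.coe_rpow_of_nonneg _ (inv_nonneg.2 hd.le), ENNReal.rpow_inv_rpow hd.ne']
    exact max_le le_self_add le_add_self
  have hsum : ∑' j, (σ j : ℝ≥0∞) ^ d ≤ (ρ : ℝ≥0∞) ^ d :=
    calc ∑' j, (σ j : ℝ≥0∞) ^ d ≤ ∑' j, (ediam (U j) ^ d + ε j) := ENNReal.tsum_le_tsum hσd
      _ = ∑' j, ediam (U j) ^ d + ∑' j, (ε j : ℝ≥0∞) := ENNReal.tsum_add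
      _ ≤ (ρ : ℝ≥0∞) ^ d / 2 + (ρ : ℝ≥0∞) ^ d / 2 := add_le_add hU.le hεsum.le
      _ = (ρ : ℝ≥0∞) ^ d := ENNReal.add_halves _
  refine ⟨U, σ, hcov, fun j => ⟨?_, ?_, ?_⟩, hsum⟩
  · exact lt_max_of_lt_right (NNReal.rpow_pos (hε j))
  · have := (ENNReal.le_tsum j).trans hsum
    rwa [ENNReal.rpow_le_rpow_iff hd, ENNReal.coe_le_coe] at this
  · rw [← ENNReal.coe_toNNReal (hUtop j), ENNReal.coe_le_coe]
    exact le_max_left _ _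

section Grid

variable {ι : Type*}

def gridCube (σ : ℝ) (γ : ι → ℕ) : Set (ι → ℝ) :=
  univ.pi fun i => Icc (γ i * σ) ((γ i + 1) * σ)

theorem ediam_gridCube_le [Fintype ι] (σ : ℝ) (γ : ι → ℕ) :
    ediam (gridCube σ γ) ≤ ENNReal.ofReal σ :=
  ediam_pi_le_of_le fun i => by rw [Real.ediam_Icc, add_one_mul, add_sub_cancel_left]

theorem ediam_gridCube_prod_le [Fintype ι] {Y : Type*} [PseudoEMetricSpace Y] {σ : ℝ≥0} (γ : ι → ℕ)
    {U : Set Y} (hU : ediam U ≤ σ) : ediam (gridCube σ γ ×ˢ U) ≤ σ :=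
  (ediam_prod_le _ _).trans <| max_le
    ((ediam_gridCube_le σ γ).trans_eq ENNReal.ofReal_coe_nnreal) hU

theorem mem_Icc_floor_div_mul {x σ : ℝ} (hx : 0 ≤ x) (hσ : 0 < σ) :
    x ∈ Icc (⌊x / σ⌋₊ * σ) ((⌊x / σ⌋₊ + 1) * σ) :=
  ⟨(le_div_iff₀ hσ).1 (Nat.floor_le (div_nonneg hx hσ.le)),
    ((div_lt_iff₀ hσ).1 (Nat.lt_floor_add_one _)).le⟩

theorem unitCube_subset_iUnion_gridCube {σ : ℝ} (hσ : 0 < σ) :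
    univ.pi (fun _ : ι => Icc (0 : ℝ) 1) ⊆
      ⋃ γ : ι → Fin (⌈σ⁻¹⌉₊ + 1), gridCube σ fun i => γ i := by
  intro t ht
  have hfloor : ∀ i, ⌊t i / σ⌋₊ < ⌈σ⁻¹⌉₊ + 1 := fun i =>
    Nat.lt_succ_of_le <| (Nat.floor_le_floor <| by
      rw [div_eq_mul_inv]; exact mul_le_of_le_one_left (inv_nonneg.2 hσ.le) (ht i trivial).2).trans
      (Nat.floor_le_ceil _)
  exact mem_iUnion.2 ⟨fun i => ⟨_, hfloor i⟩, fun i _ => mem_Icc_floor_div_mul (ht i trivial).1 hσ⟩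

theorem natCeil_inv_add_one_mul_le {σ : ℝ} (h0 : 0 < σ) (h1 : σ ≤ 1) :
    ((⌈σ⁻¹⌉₊ + 1 : ℕ) : ℝ) * σ ≤ 3 := by
  have hceil := Nat.ceil_lt_add_one (inv_nonneg.2 h0.le)
  have hinv : σ⁻¹ * σ = 1 := inv_mul_cancel₀ h0.ne'
  push_cast
  nlinarith

theorem tsum_ediam_gridCube_prod_rpow_le [Fintype ι] {Y : Type*} [PseudoEMetricSpace Y] {σ : ℝ≥0}
    (h0 : 0 < σ) (h1 : σ ≤ 1) {U : Set Y} (hU : ediam U ≤ σ) {d : ℝ} (hd : 0 ≤ d) :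
    ∑' γ : ι → Fin (⌈(σ : ℝ)⁻¹⌉₊ + 1), ediam (gridCube σ (fun i => γ i) ×ˢ U) ^ (Fintype.card ι + d)
      ≤ 3 ^ Fintype.card ι * (σ : ℝ≥0∞) ^ d := by
  classical
  set N := ⌈(σ : ℝ)⁻¹⌉₊ + 1
  have hN : (N : ℝ≥0∞) * σ ≤ 3 := by
    have := natCeil_inv_add_one_mul_le (NNReal.coe_pos.2 h0) (NNReal.coe_le_one.2 h1)
    exact_mod_cast this
  calc ∑' γ : ι → Fin N, ediam (gridCube σ (fun i => γ i) ×ˢ U) ^ (Fintype.card ι + d)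
      ≤ ∑' _ : ι → Fin N, (σ : ℝ≥0∞) ^ (Fintype.card ι + d) :=
        ENNReal.tsum_le_tsum fun γ => ENNReal.rpow_le_rpow (ediam_gridCube_prod_le _ hU)
          (by positivity)
    _ = ((N : ℝ≥0∞) * σ) ^ Fintype.card ι * (σ : ℝ≥0∞) ^ d := by
        rw [tsum_fintype, Finset.sum_const, Finset.card_univ, Fintype.card_fun, Fintype.card_fin,
          nsmul_eq_mul, ENNReal.rpow_add _ _ (by simpa using h0.ne') ENNReal.coe_ne_top,
          ENNReal.rpow_natCast, mul_pow]
        push_cast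
        ring
    _ ≤ 3 ^ Fintype.card ι * (σ : ℝ≥0∞) ^ d := by gcongr

end Grid

section Product

variable {ι : Type*} [Fintype ι] {Y : Type*} [EMetricSpace Y]

theorem hausdorffMeasure_unitCube_prod_eq_zero [MeasurableSpace Y] [BorelSpace Y] {d : ℝ}
    (hd : 0 < d) {E : Set Y} (hE : μH[d] E = 0) :
    μH[Fintype.card ι + d] (univ.pi (fun _ : ι => Icc (0 : ℝ) 1) ×ˢ E) = 0 := by
  choose U σ hcov hσ hsum using fun m : ℕ =>
    exists_cover_pos_radii hd hE (pow_pos (by norm_num : (0 : ℝ≥0) < 2⁻¹) m)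
  have hσ1 : ∀ m j, σ m j ≤ 1 := fun m j =>
    (hσ m j).2.1.trans (pow_le_one₀ (by norm_num) (by norm_num))
  have hρ : Tendsto (fun m : ℕ => ((2⁻¹ ^ m : ℝ≥0) : ℝ≥0∞)) atTop (𝓝 0) := by
    simpa using ENNReal.tendsto_coe.2 (NNReal.tendsto_pow_atTop_nhds_zero_of_lt_one
      (by norm_num : (2⁻¹ : ℝ≥0) < 1))
  have hρd : Tendsto (fun m : ℕ => 3 ^ Fintype.card ι * ((2⁻¹ ^ m : ℝ≥0) : ℝ≥0∞) ^ d) atTop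
      (𝓝 0) := by
    simpa [ENNReal.zero_rpow_of_pos hd] using
      ENNReal.Tendsto.const_mul (hρ.ennrpow_const d) (Or.inr (by simp))
  refine le_antisymm ?_ zero_le
  calc μH[Fintype.card ι + d] (univ.pi (fun _ : ι => Icc (0 : ℝ) 1) ×ˢ E)
      ≤ liminf (fun m => ∑' i : Σ j, ι → Fin (⌈(σ m j : ℝ)⁻¹⌉₊ + 1),
          ediam (gridCube (σ m i.1) (fun l => i.2 l) ×ˢ U m i.1) ^ (Fintype.card ι + d)) atTop := by
        refine Measure.hausdorffMeasure_le_liminf_tsum _ _ _ hρ _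
          (Eventually.of_forall fun m i => ?_) (Eventually.of_forall fun m => ?_)
        · exact (ediam_gridCube_prod_le _ (hσ m i.1).2.2).trans
            (ENNReal.coe_le_coe.2 (hσ m i.1).2.1)
        · rintro ⟨t, x⟩ ⟨ht, hx⟩
          obtain ⟨j, hj⟩ := mem_iUnion.1 (hcov m hx)
          obtain ⟨γ, hγ⟩ := mem_iUnion.1
            (unitCube_subset_iUnion_gridCube (NNReal.coe_pos.2 (hσ m j).1) ht)
          exact mem_iUnion.2 ⟨⟨j, γ⟩, hγ, hj⟩
    _ ≤ liminf (fun m : ℕ => 3 ^ Fintype.card ι * ((2⁻¹ ^ m : ℝ≥0) : ℝ≥0∞) ^ d) atTop := by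
        refine liminf_le_liminf (Eventually.of_forall fun m => ?_)
        rw [ENNReal.tsum_sigma']
        calc _ ≤ ∑' j, 3 ^ Fintype.card ι * (σ m j : ℝ≥0∞) ^ d :=
              ENNReal.tsum_le_tsum fun j => tsum_ediam_gridCube_prod_rpow_le (hσ m j).1
                (hσ1 m j) (hσ m j).2.2 hd.le
          _ ≤ _ := by rw [ENNReal.tsum_mul_left]; gcongr; exact hsum m
    _ = 0 := hρd.liminf_eq

theorem dimH_unitCube_prod_le (E : Set Y) :
    dimH (univ.pi (fun _ : ι => Icc (0 : ℝ) 1) ×ˢ E) ≤ Fintype.card ι + dimH E := by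
  borelize Y
  refine ENNReal.le_of_forall_pos_le_add fun ε hε hlt => ?_
  have hE : dimH E ≠ ⊤ := fun h => by simp [h] at hlt
  set d : ℝ≥0 := (dimH E).toNNReal + ε
  have hdE : dimH E < d := by
    rw [ENNReal.coe_add, ENNReal.coe_toNNReal hE]
    exact ENNReal.lt_add_right hE (by simpa using hε.ne')
  have hd : (0 : ℝ) < d := NNReal.coe_pos.2 (add_pos_of_nonneg_of_pos zero_le hε)
  have hμ := hausdorffMeasure_unitCube_prod_eq_zero (ι := ι) hd (hausdorffMeasure_of_dimH_lt hdE)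
  calc dimH (univ.pi (fun _ : ι => Icc (0 : ℝ) 1) ×ˢ E) ≤ (Fintype.card ι + d : ℝ≥0) :=
        dimH_le_of_hausdorffMeasure_ne_top (by push_cast; rw [hμ]; exact ENNReal.zero_ne_top)
    _ = Fintype.card ι + dimH E + ε := by
        rw [add_assoc, ENNReal.coe_add, ENNReal.coe_add, ENNReal.coe_toNNReal hE]; rfl

theorem dimH_univ_prod_le (E : Set Y) :
    dimH (univ ×ˢ E : Set ((ι → ℝ) × Y)) ≤ Fintype.card ι + dimH E := by
  have hcover : (univ ×ˢ E : Set ((ι → ℝ) × Y)) ⊆ ⋃ z : ι → ℤ,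
      Prod.map (· + fun i => (z i : ℝ)) id '' (univ.pi (fun _ => Icc 0 1) ×ˢ E) := by
    rintro ⟨t, x⟩ ⟨-, hx⟩
    refine mem_iUnion.2 ⟨fun i => ⌊t i⌋, (fun i => Int.fract (t i), x), ⟨fun i _ =>
      ⟨Int.fract_nonneg _, (Int.fract_lt_one _).le⟩, hx⟩, ?_⟩
    ext i <;> simp [Int.fract_add_floor]
  refine (dimH_mono hcover).trans ?_
  rw [dimH_iUnion]
  refine iSup_le fun z => ?_
  rw [((isometry_add_right _).prodMap isometry_id).dimH_image]
  exact dimH_unitCube_prod_le E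

end Product

section GraphMap

variable {ι : Type*} [Fintype ι] {V : Type*} [NormedAddCommGroup V] [NormedSpace ℝ V]

def graphMap (p : (ι → ℝ) × V × (ι → V)) : (ι → ℝ) × V :=
  (p.1, p.2.1 + ∑ i, p.1 i • p.2.2 i)

theorem contDiff_graphMap : ContDiff ℝ 1 (graphMap : (ι → ℝ) × V × (ι → V) → (ι → ℝ) × V) := by
  unfold graphMap
  fun_prop

theorem dimH_image_graphMap_le [FiniteDimensional ℝ V] (s : Set ((ι → ℝ) × V × (ι → V))) :
    dimH (graphMap '' s) ≤ dimH s :=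
  contDiff_graphMap.contDiffOn.dimH_image_le convex_univ (subset_univ s)

end GraphMap

theorem biUnion_affGraph_eq_image_graphMap (n k : ℕ)
    (E : Set ((Fin (n - k) → ℝ) × (Fin k → Fin (n - k) → ℝ))) :
    ⋃ x ∈ E, affGraph n k x = graphMap '' (univ ×ˢ E) := by
  ext p
  simp only [mem_iUnion, affGraph, mem_image, mem_prod, mem_univ, true_and,
    Prod.exists, graphMap]
  constructor
  · rintro ⟨a, b, hx, t, rfl⟩
    exact ⟨t, a, b, hx, rfl⟩
  · rintro ⟨t, a, b, hx, rfl⟩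
    exact ⟨a, b, hx, t, rfl⟩

theorem dimH_union_of_affine_subspaces_le_general
    (n k : ℕ)
    (E : Set ((Fin (n - k) → ℝ) × (Fin k → Fin (n - k) → ℝ))) :
    dimH (⋃ x ∈ E, affGraph n k x) ≤ k + dimH E := by
  rw [biUnion_affGraph_eq_image_graphMap]
  calc dimH (graphMap '' (univ ×ˢ E)) ≤ dimH (univ ×ˢ E) := dimH_image_graphMap_le _
    _ ≤ k + dimH E := by simpa using dimH_univ_prod_le (ι := Fin k) E

theorem dimH_union_of_affine_subspaces_le
    (n k : ℕ) (hk : 1 ≤ k) (hkn : k < n)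
    (E : Set ((Fin (n - k) → ℝ) × (Fin k → Fin (n - k) → ℝ))) (hE : E.Nonempty) :
    dimH (⋃ x ∈ E, affGraph n k x) ≤ k + dimH E :=
  dimH_union_of_affine_subspaces_le_general n k E
end

section
/- Let (Ω, Σ, μ) be a probability measure space, let ε ∈ (0,1], and let M ≥ 1 be an integer with Σ_{l=M}^∞ 1/l² < ε. Suppose that for each integer l ≥ M, f_l : Ω → [0,∞] is a measurable function, and that Σ_{l=M}^∞ f_l(ω) ≥ ε for every ω ∈ Ω. Then there exists an integer l ≥ M such that μ({ω ∈ Ω : f_l(ω) ≥ 1/l²}) ≥ 1/l². -/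
open scoped ENNReal
open MeasureTheory

/-! If every `f l` had `μ {1 / l² ≤ f l} < 1 / l²`, a union bound would give a point `ω` outside
all the sets `{1 / l² ≤ f l}`, since their measures sum to less than `ε ≤ 1 = μ univ`. At that
point `∑ f l ω ≤ ∑ 1 / l² < ε`, contradicting the lower bound on the sums. -/

theorem MeasureTheory.exists_forall_lt_of_tsum_lt_measure_univ {Ω ι : Type*} [MeasurableSpace Ω]
    [Countable ι] (μ : Measure Ω) (g : ι → Ω → ℝ≥0∞) (a : ι → ℝ≥0∞)
    (hμ : ∀ i, μ {ω | a i ≤ g i ω} ≤ a i) (ha : ∑' i, a i < μ Set.univ) :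
    ∃ ω, ∀ i, g i ω < a i := by
  by_contra! hcover
  have huniv : Set.univ ⊆ ⋃ i, {ω | a i ≤ g i ω} := fun ω _ => by
    simpa using hcover ω
  refine ha.not_ge ?_
  calc μ Set.univ ≤ μ (⋃ i, {ω | a i ≤ g i ω}) := measure_mono huniv
    _ ≤ ∑' i, μ {ω | a i ≤ g i ω} := measure_iUnion_le _
    _ ≤ ∑' i, a i := ENNReal.tsum_le_tsum hμ

theorem summable_one_div_add_sq (M : ℕ) :
    Summable fun l : ℕ => (1 : ℝ) / ((M + l : ℕ) : ℝ) ^ 2 := by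
  have h := (summable_nat_add_iff M).mpr (Real.summable_one_div_nat_pow.mpr one_lt_two)
  simpa only [add_comm, Nat.cast_add] using h

theorem tsum_ofReal_one_div_add_sq_lt {ε : ℝ} {M : ℕ}
    (hsum : ∑' l : ℕ, (1 : ℝ) / ((M + l : ℕ) : ℝ) ^ 2 < ε) :
    ∑' l : ℕ, ENNReal.ofReal (1 / ((M + l : ℕ) : ℝ) ^ 2) < ENNReal.ofReal ε := by
  rw [← ENNReal.ofReal_tsum_of_nonneg (fun l => by positivity) (summable_one_div_add_sq M)]
  exact (ENNReal.ofReal_lt_ofReal_iff_of_nonneg (tsum_nonneg fun l => by positivity)).2 hsum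

theorem exists_index_with_large_measure_of_large_sums_general
    {Ω : Type*} [MeasurableSpace Ω] (μ : MeasureTheory.Measure Ω)
    [MeasureTheory.IsProbabilityMeasure μ]
    (ε : ℝ) (hε1 : ε ≤ 1) (M : ℕ)
    (hsum : ∑' l : ℕ, (1 : ℝ) / ((M + l : ℕ) : ℝ) ^ 2 < ε)
    (f : ℕ → Ω → ℝ≥0∞)
    (hlow : ∀ ω : Ω, ENNReal.ofReal ε ≤ ∑' l : ℕ, f (M + l) ω) :
    ∃ l : ℕ, M ≤ l ∧ ENNReal.ofReal (1 / (l : ℝ) ^ 2) ≤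
      μ {ω | ENNReal.ofReal (1 / (l : ℝ) ^ 2) ≤ f l ω} := by
  by_contra! hsmall
  have hthresholds := tsum_ofReal_one_div_add_sq_lt hsum
  have hlt_univ : ∑' l : ℕ, ENNReal.ofReal (1 / ((M + l : ℕ) : ℝ) ^ 2) < μ Set.univ := by
    rw [measure_univ]
    exact hthresholds.trans_le (ENNReal.ofReal_le_one.2 hε1)
  obtain ⟨ω, hω⟩ := exists_forall_lt_of_tsum_lt_measure_univ μ (fun l => f (M + l)) _
    (fun l => (hsmall (M + l) le_self_add).le) hlt_univ
  exact (hlow ω).not_gt ((ENNReal.tsum_le_tsum fun l => (hω l).le).trans_lt hthresholds)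

theorem exists_index_with_large_measure_of_large_sums
    {Ω : Type*} [MeasurableSpace Ω] (μ : MeasureTheory.Measure Ω)
    [MeasureTheory.IsProbabilityMeasure μ]
    (ε : ℝ) (hε0 : 0 < ε) (hε1 : ε ≤ 1) (M : ℕ) (hM : 1 ≤ M)
    (hsum : ∑' l : ℕ, (1 : ℝ) / ((M + l : ℕ) : ℝ) ^ 2 < ε)
    (f : ℕ → Ω → ℝ≥0∞) (hf : ∀ l, M ≤ l → Measurable (f l))
    (hlow : ∀ ω : Ω, ENNReal.ofReal ε ≤ ∑' l : ℕ, f (M + l) ω) :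
    ∃ l : ℕ, M ≤ l ∧ ENNReal.ofReal (1 / (l : ℝ) ^ 2) ≤
      μ {ω | ENNReal.ofReal (1 / (l : ℝ) ^ 2) ≤ f l ω} :=
  exists_index_with_large_measure_of_large_sums_general μ ε hε1 M hsum f hlow
end

section
/- Let 1 ≤ k < n be integers. There is a constant C = C(n,k) > 0 such that for all admissible codes x = (a, b¹,…,b^k) and x' = (a', b'¹,…,b'^k) and all 0 < δ ≤ 1, the Lebesgue measure of the intersection of the open δ-neighborhoods of P(x) and P(x') inside S satisfies L^n(P(x)_δ ∩ P(x')_δ ∩ S) ≤ C · δ^{n−k+1} / (d(x,x') + δ), where d(x,x') = max(‖a−a'‖_∞, max_{1≤i≤k} ‖bⁱ−b'ⁱ‖_∞). -/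
open scoped ENNReal
open MeasureTheory

/-- A code `x = (a, b¹, …, bᵏ)` is admissible if `a ∈ [-1/2,1/2]^{n-k}` and
`a + bⁱ ∈ [-1/2,1/2]^{n-k}` for all `i`. -/
def admissibleCode (n k : ℕ) (x : (Fin (n - k) → ℝ) × (Fin k → Fin (n - k) → ℝ)) : Prop :=
  (∀ j, |x.1 j| ≤ 1 / 2) ∧ ∀ i j, |x.1 j + x.2 i j| ≤ 1 / 2

/-- The set `S = C_simplex × [-1/2,1/2]^{n-k} ⊆ ℝᵏ × ℝ^{n-k}`, where `C_simplex` is the convex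
hull of `{0, e₁, …, e_k}` in `ℝᵏ`. -/
def simplexCube (n k : ℕ) : Set ((Fin k → ℝ) × (Fin (n - k) → ℝ)) :=
  {p | p.1 ∈ convexHull ℝ
        (insert 0 (Set.range fun i : Fin k => (Pi.single i 1 : Fin k → ℝ))) ∧
       ∀ j, |p.2 j| ≤ 1 / 2}

/-!
Admissible codes have `‖bⁱ‖ ≤ 1`, so the map `t ↦ a + ∑ tᵢ bⁱ` whose graph is `P(x)` is
`k`-Lipschitz, and a point of `P(x)_δ` is vertically within `(k+1)δ` of `P(x)`. As the simplex lies
in the unit cube, the intersection is thus contained in the `(k+1)δ`-vertical neighbourhood of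
`P(x)` over the set `B ⊆ [0,1]ᵏ` of base points where the two graphs are `2(k+1)δ`-close, whose
volume is `vol B · (2(k+1)δ)^{n-k}`. Some coordinate of the affine map
`t ↦ (a - a') + ∑ tᵢ (bⁱ - b'ⁱ)` has a coefficient of size at least `d(x,x')`, so `B` lies in a
slab of the unit cube of width `O(δ / d(x,x'))`.
-/

open Set Metric
open scoped NNReal

lemma Matrix.det_one_updateRow {ι R : Type*} [Fintype ι] [DecidableEq ι] [CommRing R] (i : ι)
    (c : ι → R) : ((1 : Matrix ι ι R).updateRow i c).det = c i := by
  have hc : ∑ j, c j • (1 : Matrix ι ι R) j = c := by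
    ext j
    simp [Matrix.one_apply]
  simpa [hc] using Matrix.det_updateRow_sum (1 : Matrix ι ι R) i c

section UnitCube

variable {ι : Type*} [Fintype ι]

lemma volume_sep_abs_add_dotProduct_le_of_ne (c₀ : ℝ) (c : ι → ℝ) {i : ι} (hi : c i ≠ 0)
    (η : ℝ) :
    volume {s ∈ Icc (0 : ι → ℝ) 1 | |c₀ + c ⬝ᵥ s| ≤ η} ≤ ENNReal.ofReal (2 * η / |c i|) := by
  classical
  let L := Matrix.toLin' ((1 : Matrix ι ι ℝ).updateRow i c)
  have hL : ∀ s, L s = Function.update s i (c ⬝ᵥ s) := by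
    intro s
    ext m
    rcases eq_or_ne m i with rfl | hm
    · simp [L, Matrix.mulVec]
    · simp [L, Matrix.mulVec, hm, Matrix.one_apply, dotProduct]
  have hdet : LinearMap.det L = c i := by
    rw [LinearMap.det_toLin', Matrix.det_one_updateRow]
  let box : Set (ι → ℝ) := Icc (Function.update 0 i (-c₀ - η)) (Function.update 1 i (-c₀ + η))
  have hsub : {s ∈ Icc (0 : ι → ℝ) 1 | |c₀ + c ⬝ᵥ s| ≤ η} ⊆ L ⁻¹' box := by
    rintro s ⟨⟨hs0, hs1⟩, hs⟩
    obtain ⟨h₁, h₂⟩ := abs_le.1 hs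
    simp only [mem_preimage, hL, box, mem_Icc]
    constructor <;> intro m <;> rcases eq_or_ne m i with rfl | hm
    · simp; linarith
    · simpa [hm] using hs0 m
    · simp; linarith
    · simpa [hm] using hs1 m
  have hbox : volume box = ENNReal.ofReal (2 * η) := by
    rw [Real.volume_Icc_pi, ← Finset.mul_prod_erase _ _ (Finset.mem_univ i),
      Finset.prod_eq_one fun m hm => by simp [Finset.ne_of_mem_erase hm]]
    simp only [Function.update_self]
    ring_nf
  calc volume {s ∈ Icc (0 : ι → ℝ) 1 | |c₀ + c ⬝ᵥ s| ≤ η}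
      ≤ volume (L ⁻¹' box) := measure_mono hsub
    _ = ENNReal.ofReal |(c i)⁻¹| * ENNReal.ofReal (2 * η) := by
      rw [Measure.addHaar_preimage_linearMap volume (hdet ▸ hi), hdet, hbox]
    _ = ENNReal.ofReal (2 * η / |c i|) := by
      rw [← ENNReal.ofReal_mul (abs_nonneg _), abs_inv, inv_mul_eq_div]

lemma abs_dotProduct_le_sum_abs_of_mem_Icc (c : ι → ℝ) {s : ι → ℝ} (hs : s ∈ Icc 0 1) :
    |c ⬝ᵥ s| ≤ ∑ i, |c i| := by
  refine (Finset.abs_sum_le_sum_abs _ _).trans (Finset.sum_le_sum fun i _ => ?_)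
  have h₀ : 0 ≤ s i := hs.1 i
  rw [abs_mul]
  exact mul_le_of_le_one_right (abs_nonneg _) (abs_le.2 ⟨by linarith, hs.2 i⟩)

/-- Either some `|c i|` is at least `m / (2 (card ι + 1))` and the set is a thin slab, or the
constant term dominates and the set is empty once `η < m / 2`. -/
lemma volume_sep_abs_add_dotProduct_le (c₀ : ℝ) (c : ι → ℝ) {m η : ℝ} (hm : 0 < m)
    (hη : 0 ≤ η) (hc : m ≤ |c₀| ∨ ∃ i, m ≤ |c i|) :
    volume {s ∈ Icc (0 : ι → ℝ) 1 | |c₀ + c ⬝ᵥ s| ≤ η} ≤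
      ENNReal.ofReal (4 * (Fintype.card ι + 1) * η / m) := by
  set K : ℝ := Fintype.card ι + 1
  have hK : 1 ≤ K := by simp [K]
  rcases le_or_gt (m / 2) η with hη' | hη'
  · calc volume {s ∈ Icc (0 : ι → ℝ) 1 | |c₀ + c ⬝ᵥ s| ≤ η}
        ≤ volume (Icc (0 : ι → ℝ) 1) := measure_mono fun s hs => hs.1
      _ = ENNReal.ofReal 1 := by simp [Real.volume_Icc_pi]
      _ ≤ _ := by
        gcongr
        rw [le_div_iff₀ hm]
        nlinarith
  by_cases hbig : ∃ i, m / (2 * K) ≤ |c i|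
  · obtain ⟨i, hi⟩ := hbig
    have hi₀ : 0 < |c i| := lt_of_lt_of_le (by positivity) hi
    refine (volume_sep_abs_add_dotProduct_le_of_ne c₀ c (abs_pos.1 hi₀) η).trans ?_
    apply ENNReal.ofReal_le_ofReal
    calc 2 * η / |c i| ≤ 2 * η / (m / (2 * K)) := by gcongr
      _ = 4 * K * η / m := by field_simp; ring
  simp only [not_exists, not_le] at hbig
  have hc₀ : m ≤ |c₀| := by
    refine hc.resolve_right fun ⟨i, hi⟩ => ?_
    have : m / (2 * K) ≤ m := div_le_self hm.le (by linarith)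
    linarith [hbig i]
  have hsum : ∑ i, |c i| ≤ m / 2 := by
    calc ∑ i, |c i| ≤ ∑ _i : ι, m / (2 * K) := Finset.sum_le_sum fun i _ => (hbig i).le
      _ = (K - 1) / K * (m / 2) := by simp [K]; field_simp
      _ ≤ m / 2 := mul_le_of_le_one_left (by positivity)
          (by rw [div_le_one (by positivity)]; linarith)
  have hempty : {s ∈ Icc (0 : ι → ℝ) 1 | |c₀ + c ⬝ᵥ s| ≤ η} = ∅ := by
    refine eq_empty_of_forall_notMem fun s ⟨hs, hsη⟩ => ?_
    linarith [abs_dotProduct_le_sum_abs_of_mem_Icc c hs, abs_sub_abs_le_abs_add c₀ (c ⬝ᵥ s)]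
  rw [hempty, measure_empty]
  exact zero_le

end UnitCube

lemma prod_setOf_fst_mem_sub_mem {α G : Type*} [MeasurableSpace α] [MeasurableSpace G]
    [AddGroup G] [MeasurableAdd G] [MeasurableSub₂ G] (μ : Measure α) (ν : Measure G) [SFinite ν]
    [ν.IsAddRightInvariant] {f : α → G} (hf : Measurable f) {B : Set α} {T : Set G}
    (hB : MeasurableSet B) (hT : MeasurableSet T) :
    μ.prod ν {p | p.1 ∈ B ∧ p.2 - f p.1 ∈ T} = μ B * ν T := by
  have hmeas : MeasurableSet {p : α × G | p.1 ∈ B ∧ p.2 - f p.1 ∈ T} :=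
    (measurable_fst hB).inter (hT.preimage (measurable_snd.sub (hf.comp measurable_fst)))
  have hslice : ∀ a, ν (Prod.mk a ⁻¹' {p | p.1 ∈ B ∧ p.2 - f p.1 ∈ T}) =
      B.indicator (fun _ => ν T) a := by
    intro a
    by_cases ha : a ∈ B
    · simp only [ha, indicator_of_mem, preimage_ofPred_eq, true_and, sub_eq_add_neg]
      exact measure_preimage_add_right ν (-f a) T
    · simp [ha]
  rw [Measure.prod_apply hmeas, lintegral_congr hslice, lintegral_indicator_const hB, mul_comm]

lemma volume_setOf_fst_mem_dist_le {ι ι' : Type*} [Fintype ι] [Fintype ι']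
    {f : (ι' → ℝ) → ι → ℝ} (hf : Measurable f) {B : Set (ι' → ℝ)} (hB : MeasurableSet B)
    {r : ℝ} (hr : 0 ≤ r) :
    volume {p : (ι' → ℝ) × (ι → ℝ) | p.1 ∈ B ∧ dist p.2 (f p.1) ≤ r} =
      volume B * ENNReal.ofReal ((2 * r) ^ Fintype.card ι) := by
  rw [← Real.volume_pi_closedBall 0 hr,
    ← prod_setOf_fst_mem_sub_mem _ _ hf hB isClosed_closedBall.measurableSet]
  simp only [mem_closedBall_zero_iff, ← dist_eq_norm]
  rfl

lemma dist_snd_lt_of_mem_thickening_graph {X Y : Type*} [PseudoMetricSpace X]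
    [PseudoMetricSpace Y] {g : X → Y} {K : ℝ≥0} (hg : LipschitzWith K g) {δ : ℝ} {p : X × Y}
    (hp : p ∈ thickening δ (range fun t => (t, g t))) : dist p.2 (g p.1) < (K + 1) * δ := by
  obtain ⟨_, ⟨t, rfl⟩, hpt⟩ := mem_thickening_iff.1 hp
  rw [Prod.dist_eq, max_lt_iff] at hpt
  calc dist p.2 (g p.1) ≤ dist p.2 (g t) + dist (g t) (g p.1) := dist_triangle _ _ _
    _ ≤ dist p.2 (g t) + K * dist t p.1 := by gcongr; exact hg.dist_le_mul _ _
    _ < δ + K * δ := add_lt_add_of_lt_of_le hpt.2 (by rw [dist_comm]; gcongr; exact hpt.1.le)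
    _ = (K + 1) * δ := by ring

section Codes

variable {ι ι' E : Type*} [Fintype ι]

def codeMap [AddCommGroup E] [Module ℝ E] (x : E × (ι → E)) (t : ι → ℝ) : E :=
  x.1 + ∑ i, t i • x.2 i

lemma lipschitzWith_codeMap [SeminormedAddCommGroup E] [NormedSpace ℝ E] {x : E × (ι → E)}
    (hx : ∀ i, ‖x.2 i‖ ≤ 1) : LipschitzWith (Fintype.card ι) (codeMap x) := by
  refine LipschitzWith.of_dist_le_mul fun s t => ?_
  calc dist (codeMap x s) (codeMap x t) = ‖∑ i, (s i - t i) • x.2 i‖ := by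
        simp [codeMap, dist_eq_norm, sub_smul, Finset.sum_sub_distrib]
    _ ≤ ∑ i, ‖s i - t i‖ * ‖x.2 i‖ :=
        (norm_sum_le _ _).trans (Finset.sum_le_sum fun i _ => norm_smul_le _ _)
    _ ≤ ∑ _i : ι, dist s t := Finset.sum_le_sum fun i _ =>
        (mul_le_of_le_one_right (norm_nonneg _) (hx i)).trans (dist_le_pi_dist s t i)
    _ = Fintype.card ι * dist s t := by simp

lemma continuous_codeMap [SeminormedAddCommGroup E] [NormedSpace ℝ E] (x : E × (ι → E)) :
    Continuous (codeMap x) :=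
  continuous_const.add
    (continuous_finsetSum _ fun i _ => (continuous_apply i).smul continuous_const)

lemma codeMap_sub_codeMap_apply (x x' : (ι' → ℝ) × (ι → ι' → ℝ)) (s : ι → ℝ) (j : ι') :
    (codeMap x s - codeMap x' s) j = (x.1 j - x'.1 j) + (fun i => x.2 i j - x'.2 i j) ⬝ᵥ s := by
  simp [codeMap, dotProduct, Finset.sum_apply, mul_sub, Finset.sum_sub_distrib, mul_comm]
  ring

lemma exists_dist_le_abs_sub [Fintype ι'] {x x' : (ι' → ℝ) × (ι → ι' → ℝ)}
    (h : 0 < dist x x') :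
    ∃ j, dist x x' ≤ |x.1 j - x'.1 j| ∨ ∃ i, dist x x' ≤ |x.2 i j - x'.2 i j| := by
  by_contra! hlt
  refine lt_irrefl (dist x x') ?_
  nth_rw 1 [Prod.dist_eq]
  refine max_lt ((dist_pi_lt_iff h).2 fun j => (hlt j).1) ((dist_pi_lt_iff h).2 fun i => ?_)
  exact (dist_pi_lt_iff h).2 fun j => (hlt j).2 i

lemma volume_sep_dist_codeMap_le [Fintype ι'] (x x' : (ι' → ℝ) × (ι → ι' → ℝ)) {η : ℝ}
    (hη : 0 < η) :
    volume {s ∈ Icc (0 : ι → ℝ) 1 | dist (codeMap x s) (codeMap x' s) ≤ η} ≤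
      ENNReal.ofReal (8 * (Fintype.card ι + 1) * η / (dist x x' + η)) := by
  set d := dist x x'
  rcases le_or_gt d η with hd | hd
  · calc volume {s ∈ Icc (0 : ι → ℝ) 1 | dist (codeMap x s) (codeMap x' s) ≤ η}
        ≤ volume (Icc (0 : ι → ℝ) 1) := measure_mono fun s hs => hs.1
      _ = ENNReal.ofReal 1 := by simp [Real.volume_Icc_pi]
      _ ≤ _ := by
        gcongr
        rw [one_le_div (by positivity)]
        nlinarith
  obtain ⟨j, hj⟩ := exists_dist_le_abs_sub (hη.trans hd)
  calc volume {s ∈ Icc (0 : ι → ℝ) 1 | dist (codeMap x s) (codeMap x' s) ≤ η}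
      ≤ volume {s ∈ Icc (0 : ι → ℝ) 1 |
          |(x.1 j - x'.1 j) + (fun i => x.2 i j - x'.2 i j) ⬝ᵥ s| ≤ η} := by
        refine measure_mono fun s ⟨hs, hsη⟩ => ⟨hs, ?_⟩
        rw [← codeMap_sub_codeMap_apply, ← Real.norm_eq_abs]
        exact (norm_le_pi_norm _ j).trans (dist_eq_norm (codeMap x s) _ ▸ hsη)
    _ ≤ ENNReal.ofReal (4 * (Fintype.card ι + 1) * η / d) :=
        volume_sep_abs_add_dotProduct_le _ _ (hη.trans hd) hη.le hj
    _ ≤ _ := by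
        gcongr ENNReal.ofReal ?_
        rw [div_le_div_iff₀ (hη.trans hd) (by positivity)]
        have hK : 0 ≤ 4 * ((Fintype.card ι : ℝ) + 1) * η := by positivity
        nlinarith [mul_le_mul_of_nonneg_left (show d + η ≤ 2 * d by linarith) hK]

end Codes

lemma admissibleCode.norm_snd_le_one {n k : ℕ}
    {x : (Fin (n - k) → ℝ) × (Fin k → Fin (n - k) → ℝ)} (hx : admissibleCode n k x) (i : Fin k) :
    ‖x.2 i‖ ≤ 1 := by
  refine (pi_norm_le_iff_of_nonneg zero_le_one).2 fun j => ?_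
  rw [Real.norm_eq_abs, show x.2 i j = (x.1 j + x.2 i j) - x.1 j by ring]
  linarith [abs_sub (x.1 j + x.2 i j) (x.1 j), hx.1 j, hx.2 i j]

lemma affGraph_eq_range (n k : ℕ) (x : (Fin (n - k) → ℝ) × (Fin k → Fin (n - k) → ℝ)) :
    affGraph n k x = range fun t => (t, codeMap x t) := by
  ext p
  simp [affGraph, codeMap, eq_comm]

lemma convexHull_insert_zero_single_subset_Icc {ι : Type*} [DecidableEq ι] :
    convexHull ℝ (insert 0 (range fun i : ι => (Pi.single i 1 : ι → ℝ))) ⊆ Icc 0 1 := by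
  refine convexHull_min (insert_subset_iff.2 ⟨⟨le_rfl, zero_le_one⟩, ?_⟩) (convex_Icc 0 1)
  rintro _ ⟨i, rfl⟩
  refine ⟨Pi.single_nonneg.2 zero_le_one, fun j => ?_⟩
  rcases eq_or_ne j i with rfl | h <;> simp [*]

lemma inter_thickenings_subset {n k : ℕ}
    {x x' : (Fin (n - k) → ℝ) × (Fin k → Fin (n - k) → ℝ)}
    (hx : admissibleCode n k x) (hx' : admissibleCode n k x') (δ : ℝ) :
    thickening δ (affGraph n k x) ∩ thickening δ (affGraph n k x') ∩ simplexCube n k ⊆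
      {p | p.1 ∈ {s ∈ Icc 0 1 | dist (codeMap x s) (codeMap x' s) ≤ 2 * ((k + 1) * δ)} ∧
        dist p.2 (codeMap x p.1) ≤ (k + 1) * δ} := by
  rintro p ⟨⟨hp, hp'⟩, hpS⟩
  have near : ∀ y, admissibleCode n k y → p ∈ thickening δ (affGraph n k y) →
      dist p.2 (codeMap y p.1) ≤ (k + 1) * δ := by
    intro y hy hpy
    rw [affGraph_eq_range] at hpy
    simpa using
      (dist_snd_lt_of_mem_thickening_graph (lipschitzWith_codeMap hy.norm_snd_le_one) hpy).le
  refine ⟨⟨convexHull_insert_zero_single_subset_Icc hpS.1, ?_⟩, near x hx hp⟩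
  linarith [dist_triangle_left (codeMap x p.1) (codeMap x' p.1) p.2, near x hx hp,
    near x' hx' hp']

theorem volume_inter_thickenings_le_general
    (n k : ℕ) :
    ∃ C : ℝ, 0 < C ∧
      ∀ x x' : (Fin (n - k) → ℝ) × (Fin k → Fin (n - k) → ℝ),
        admissibleCode n k x → admissibleCode n k x' →
        ∀ δ : ℝ, 0 < δ → δ ≤ 1 →
          volume (Metric.thickening δ (affGraph n k x) ∩
              Metric.thickening δ (affGraph n k x') ∩ simplexCube n k) ≤
            ENNReal.ofReal (C * δ ^ (n - k + 1) / (dist x x' + δ)) := by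
  refine ⟨8 * (k + 1) * (2 * (k + 1)) ^ (n - k + 1), by positivity,
    fun x x' hx hx' δ hδ _ => ?_⟩
  set B := {s ∈ Icc (0 : Fin k → ℝ) 1 | dist (codeMap x s) (codeMap x' s) ≤ 2 * ((k + 1) * δ)}
  have hB : MeasurableSet B := measurableSet_Icc.inter
    (measurableSet_le ((continuous_codeMap x).dist (continuous_codeMap x')).measurable
      measurable_const)
  set η : ℝ := 2 * ((k + 1) * δ) with hη
  have hδη : δ ≤ η := by nlinarith [k.cast_nonneg (α := ℝ)]
  calc volume (thickening δ (affGraph n k x) ∩ thickening δ (affGraph n k x') ∩ simplexCube n k)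
      ≤ volume {p : (Fin k → ℝ) × (Fin (n - k) → ℝ) |
          p.1 ∈ B ∧ dist p.2 (codeMap x p.1) ≤ (k + 1) * δ} :=
        measure_mono (inter_thickenings_subset hx hx' δ)
    _ = volume B * ENNReal.ofReal (η ^ (n - k)) := by
        simpa using volume_setOf_fst_mem_dist_le (continuous_codeMap x).measurable hB
          (by positivity : 0 ≤ (k + 1) * δ)
    _ ≤ ENNReal.ofReal (8 * (k + 1) * η / (dist x x' + η)) * ENNReal.ofReal (η ^ (n - k)) := by
        gcongr
        have h := volume_sep_dist_codeMap_le (ι := Fin k) x x' (by positivity : 0 < η)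
        rwa [Fintype.card_fin] at h
    _ = ENNReal.ofReal (8 * (k + 1) * (2 * (k + 1)) ^ (n - k + 1) * δ ^ (n - k + 1) /
          (dist x x' + η)) := by
        have hpow : (2 * (k + 1) : ℝ) ^ (n - k + 1) * δ ^ (n - k + 1) = η ^ (n - k + 1) := by
          rw [← mul_pow, hη, mul_assoc]
        rw [← ENNReal.ofReal_mul (by positivity), mul_assoc (8 * ((k : ℝ) + 1)), hpow]
        congr 1
        ring
    _ ≤ _ := by gcongr

theorem volume_inter_thickenings_le
    (n k : ℕ) (hk : 1 ≤ k) (hkn : k < n) :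
    ∃ C : ℝ, 0 < C ∧
      ∀ x x' : (Fin (n - k) → ℝ) × (Fin k → Fin (n - k) → ℝ),
        admissibleCode n k x → admissibleCode n k x' →
        ∀ δ : ℝ, 0 < δ → δ ≤ 1 →
          volume (Metric.thickening δ (affGraph n k x) ∩
              Metric.thickening δ (affGraph n k x') ∩ simplexCube n k) ≤
            ENNReal.ofReal (C * δ ^ (n - k + 1) / (dist x x' + δ)) :=
  volume_inter_thickenings_le_general n k
end

section
/- Let 1 ≤ k < n be integers. There is a constant D = D(n,k) > 0 such that for all admissible codes x = (a, b¹,…,b^k) and x' = (a', b'¹,…,b'^k) and all 0 < δ ≤ 1: if ‖a−a'‖_∞ > max_{1≤i≤k} ‖bⁱ−b'ⁱ‖_∞ + D·δ, then the open δ-neighborhoods of P(x) and P(x') are disjoint inside S, i.e. P(x)_δ ∩ P(x')_δ ∩ S = ∅. -/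
open scoped ENNReal
open MeasureTheory

/-!
If `p ∈ S` lies within `δ` of the graph points `(t, y)` of `P(x)` and `(t', y')` of `P(x')`,
then `‖t‖₁ ≤ 1 + kδ` because `p.1` lies in the simplex, `|tᵢ - t'ᵢ| < 2δ`, and `‖y - y'‖ < 2δ`.
Writing `a - a' = (y - y') - ∑ tᵢ (bⁱ - b'ⁱ) - ∑ (tᵢ - t'ᵢ) b'ⁱ` and using `‖bⁱ‖, ‖b'ⁱ‖ ≤ 1`
(admissibility) gives `‖a - a'‖ < 2δ + (1 + kδ)‖b - b'‖ + 2kδ ≤ ‖b - b'‖ + (4k + 2)δ`,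
so `D = 4k + 2` works.
-/

lemma sum_abs_le_one_of_mem_convexHull {ι : Type*} [Fintype ι] [DecidableEq ι] {s : ι → ℝ}
    (hs : s ∈ convexHull ℝ (insert 0 (Set.range fun i : ι => (Pi.single i 1 : ι → ℝ)))) :
    ∑ i, |s i| ≤ 1 := by
  have hconv : Convex ℝ {s : ι → ℝ | ∑ i, |s i| ≤ 1} := by
    intro u hu v hv a b ha hb hab
    calc ∑ i, |a * u i + b * v i| ≤ ∑ i, (a * |u i| + b * |v i|) := by
          gcongr with i
          exact (abs_add_le _ _).trans_eq
            (by rw [abs_mul, abs_mul, abs_of_nonneg ha, abs_of_nonneg hb])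
      _ = a * ∑ i, |u i| + b * ∑ i, |v i| := by
          rw [Finset.sum_add_distrib, Finset.mul_sum, Finset.mul_sum]
      _ ≤ 1 := by nlinarith [hu.out, hv.out]
  refine convexHull_min ?_ hconv hs
  rintro _ (rfl | ⟨i, rfl⟩)
  · simp
  · simp [Pi.single_apply, apply_ite]

lemma sum_abs_sub_le_card_mul_dist {ι : Type*} [Fintype ι] (t t' : ι → ℝ) :
    ∑ i, |t i - t' i| ≤ Fintype.card ι * dist t t' := by
  have := Finset.sum_le_card_nsmul Finset.univ (fun i => |t i - t' i|) (dist t t') fun i _ =>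
    (Real.dist_eq (t i) (t' i)).symm.trans_le (dist_le_pi_dist t t' i)
  rwa [nsmul_eq_mul, Finset.card_univ] at this

lemma norm_sum_smul_le {ι F : Type*} [Fintype ι] [SeminormedAddCommGroup F] [NormedSpace ℝ F]
    (t : ι → ℝ) (v : ι → F) : ‖∑ i, t i • v i‖ ≤ (∑ i, |t i|) * ‖v‖ := by
  rw [Finset.sum_mul]
  refine (norm_sum_le _ _).trans (Finset.sum_le_sum fun i _ => ?_)
  rw [norm_smul, Real.norm_eq_abs]
  gcongr
  exact norm_le_pi_norm v i

lemma norm_sub_le_of_affine_combinations {ι F : Type*} [Fintype ι] [SeminormedAddCommGroup F]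
    [NormedSpace ℝ F] (a a' : F) (b b' : ι → F) (t t' : ι → ℝ) :
    ‖a - a'‖ ≤ ‖(a + ∑ i, t i • b i) - (a' + ∑ i, t' i • b' i)‖
      + (∑ i, |t i|) * ‖b - b'‖ + (∑ i, |t i - t' i|) * ‖b'‖ := by
  have hsplit : a - a' = ((a + ∑ i, t i • b i) - (a' + ∑ i, t' i • b' i))
      - ∑ i, t i • (b - b') i - ∑ i, (t i - t' i) • b' i := by
    simp only [Pi.sub_apply, smul_sub, sub_smul, Finset.sum_sub_distrib]; abel
  rw [hsplit]
  refine (norm_sub_le _ _).trans (add_le_add ?_ (norm_sum_smul_le _ b'))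
  exact (norm_sub_le _ _).trans (add_le_add le_rfl (norm_sum_smul_le t (b - b')))

lemma norm_snd_le_one_of_admissibleCode {n k : ℕ}
    {x : (Fin (n - k) → ℝ) × (Fin k → Fin (n - k) → ℝ)} (hx : admissibleCode n k x) :
    ‖x.2‖ ≤ 1 := by
  refine pi_norm_le_iff_of_nonneg zero_le_one |>.2 fun i => ?_
  refine pi_norm_le_iff_of_nonneg zero_le_one |>.2 fun j => ?_
  rw [Real.norm_eq_abs]
  have := abs_sub (x.1 j + x.2 i j) (x.1 j)
  simp only [add_sub_cancel_left] at this
  linarith [hx.1 j, hx.2 i j]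

lemma exists_dist_lt_of_mem_thickening_affGraph {n k : ℕ} {δ : ℝ}
    {x : (Fin (n - k) → ℝ) × (Fin k → Fin (n - k) → ℝ)}
    {p : (Fin k → ℝ) × (Fin (n - k) → ℝ)}
    (hp : p ∈ Metric.thickening δ (affGraph n k x)) :
    ∃ t : Fin k → ℝ, dist p.1 t < δ ∧ dist p.2 (x.1 + ∑ i, t i • x.2 i) < δ := by
  obtain ⟨_, ⟨t, rfl⟩, hpq⟩ := Metric.mem_thickening_iff.1 hp
  rw [Prod.dist_eq, max_lt_iff] at hpq
  exact ⟨t, hpq⟩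

lemma dist_lt_of_near_affine_combinations {ι F : Type*} [Fintype ι] [SeminormedAddCommGroup F]
    [NormedSpace ℝ F] {a a' y : F} {b b' : ι → F} {s t t' : ι → ℝ} {δ : ℝ}
    (hs : ∑ i, |s i| ≤ 1) (hb : ‖b‖ ≤ 1) (hb' : ‖b'‖ ≤ 1)
    (ht : dist s t < δ) (ht' : dist s t' < δ)
    (hy : dist y (a + ∑ i, t i • b i) < δ) (hy' : dist y (a' + ∑ i, t' i • b' i) < δ) :
    dist a a' < dist b b' + (4 * Fintype.card ι + 2) * δ := by
  have hδ : 0 ≤ δ := dist_nonneg.trans ht.le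
  have hT : ∑ i, |t i| ≤ 1 + Fintype.card ι * δ := by
    have hst := sum_abs_sub_le_card_mul_dist t s
    have : ∑ i, |t i| ≤ ∑ i, |s i| + ∑ i, |t i - s i| := by
      rw [← Finset.sum_add_distrib]
      gcongr with i
      linarith [abs_sub_abs_le_abs_sub (t i) (s i)]
    have : (Fintype.card ι : ℝ) * dist t s ≤ Fintype.card ι * δ := by
      rw [dist_comm]; gcongr
    linarith
  have hTT' : ∑ i, |t i - t' i| ≤ Fintype.card ι * (2 * δ) := by
    refine (sum_abs_sub_le_card_mul_dist t t').trans ?_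
    gcongr
    linarith [dist_triangle_left t t' s]
  have hY : ‖(a + ∑ i, t i • b i) - (a' + ∑ i, t' i • b' i)‖ < 2 * δ := by
    rw [← dist_eq_norm]
    linarith [dist_triangle_left (a + ∑ i, t i • b i) (a' + ∑ i, t' i • b' i) y]
  have hbb' : ‖b - b'‖ ≤ 2 := by linarith [norm_sub_le b b']
  have hTb : (∑ i, |t i|) * ‖b - b'‖ ≤ ‖b - b'‖ + Fintype.card ι * δ * 2 := by
    linarith [mul_le_mul_of_nonneg_right hT (norm_nonneg (b - b')),
      mul_le_mul_of_nonneg_left hbb' (by positivity : (0 : ℝ) ≤ Fintype.card ι * δ)]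
  have hTT'b' : (∑ i, |t i - t' i|) * ‖b'‖ ≤ Fintype.card ι * (2 * δ) := by
    simpa using mul_le_mul hTT' hb' (norm_nonneg _) (by positivity)
  rw [dist_eq_norm a a', dist_eq_norm b b']
  linarith [norm_sub_le_of_affine_combinations a a' b b' t t']

theorem thickenings_disjoint_of_far_intercepts_general
    (n k : ℕ) :
    ∃ D : ℝ, 0 < D ∧
      ∀ x x' : (Fin (n - k) → ℝ) × (Fin k → Fin (n - k) → ℝ),
        admissibleCode n k x → admissibleCode n k x' →
        ∀ δ : ℝ, 0 < δ → δ ≤ 1 →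
          dist x.1 x'.1 > dist x.2 x'.2 + D * δ →
          Metric.thickening δ (affGraph n k x) ∩
            Metric.thickening δ (affGraph n k x') ∩ simplexCube n k = ∅ := by
  refine ⟨4 * k + 2, by positivity, fun x x' hx hx' δ _ _ hfar => ?_⟩
  refine Set.eq_empty_of_forall_notMem fun p ⟨⟨hp, hp'⟩, hpS⟩ => hfar.not_ge ?_
  obtain ⟨t, ht, hy⟩ := exists_dist_lt_of_mem_thickening_affGraph hp
  obtain ⟨t', ht', hy'⟩ := exists_dist_lt_of_mem_thickening_affGraph hp'
  simpa using (dist_lt_of_near_affine_combinations (sum_abs_le_one_of_mem_convexHull hpS.1)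
    (norm_snd_le_one_of_admissibleCode hx) (norm_snd_le_one_of_admissibleCode hx')
    ht ht' hy hy').le

theorem thickenings_disjoint_of_far_intercepts
    (n k : ℕ) (hk : 1 ≤ k) (hkn : k < n) :
    ∃ D : ℝ, 0 < D ∧
      ∀ x x' : (Fin (n - k) → ℝ) × (Fin k → Fin (n - k) → ℝ),
        admissibleCode n k x → admissibleCode n k x' →
        ∀ δ : ℝ, 0 < δ → δ ≤ 1 →
          dist x.1 x'.1 > dist x.2 x'.2 + D * δ →
          Metric.thickening δ (affGraph n k x) ∩
            Metric.thickening δ (affGraph n k x') ∩ simplexCube n k = ∅ :=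
  thickenings_disjoint_of_far_intercepts_general n k
end

section
/- Let n ≥ 1 be an integer and 0 ≤ α ≤ n a real number. There is a constant c = c(n,α) > 0 such that for every set A ⊆ ℝ^n and every δ > 0, the Lebesgue measure of the open δ-neighborhood of A satisfies L^n(A_δ) ≥ c · H^α_∞(A) · δ^{n−α}. -/
open scoped ENNReal
open MeasureTheory

/-- The `α`-dimensional Hausdorff content `H^α_∞`: the infimum, over all countable covers
`A ⊆ ⋃ i, U i`, of `∑ i (diam U i) ^ α` (empty sets of the cover contribute `0`). -/
noncomputable def hContent {X : Type*} [EMetricSpace X] (α : ℝ) (A : Set X) : ℝ≥0∞ :=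
  ⨅ (U : ℕ → Set X) (_ : A ⊆ ⋃ i, U i),
    ∑' i, ⨆ (_ : (U i).Nonempty), EMetric.diam (U i) ^ α

/-!
Take a maximal `2δ`-separated subset `N` of `A`. By maximality the closed balls of radius `2δ`
around `N` cover `A`, so `H^α_∞(A) ≤ #N · (4δ)^α`; by separation the balls of radius `δ` around
`N` are disjoint and lie in `A_δ`, so `#N · L^n(B(0,1)) · δ^n ≤ L^n(A_δ)`. Dividing, one may take
`c = L^n(B(0,1)) / 4^α`.
-/

open Set Metric
open scoped NNReal

theorem exists_maximal_pairwise_subset {X : Type*} (r : X → X → Prop) (A : Set X) :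
    ∃ N, Maximal (fun N ↦ N ⊆ A ∧ N.Pairwise r) N :=
  zorn_subset _ fun C hCA hC ↦ ⟨⋃₀ C, ⟨sUnion_subset fun _ hN ↦ (hCA hN).1,
    (pairwise_sUnion hC.directedOn).2 fun _ hN ↦ (hCA hN).2⟩, fun _ ↦ subset_sUnion_of_mem⟩

theorem hContent_le_tsum {X ι : Type*} [EMetricSpace X] [Countable ι] (α : ℝ) {A : Set X}
    (U : ι → Set X) (hA : A ⊆ ⋃ i, U i) : hContent α A ≤ ∑' i, ediam (U i) ^ α := by
  let _ := Encodable.ofCountable ι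
  let m : Set X → ℝ≥0∞ := fun s ↦ ⨆ _ : s.Nonempty, ediam s ^ α
  calc hContent α A ≤ ∑' k, m (⋃ i ∈ Encodable.decode₂ ι k, U i) :=
        iInf₂_le _ (by rwa [Encodable.iUnion_decode₂])
    _ = ∑' i, m (U i) := tsum_iUnion_decode₂ m (by simp [m]) U
    _ ≤ ∑' i, ediam (U i) ^ α := ENNReal.tsum_le_tsum fun _ ↦ iSup_const_le

namespace Metric

theorem IsCover.hContent_le {X : Type*} [EMetricSpace X] {α : ℝ} (hα : 0 ≤ α) {ε : ℝ≥0}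
    {A N : Set X} (hN : N.Countable) (hcover : IsCover ε A N) :
    hContent α A ≤ N.encard * (2 * ε : ℝ≥0∞) ^ α := by
  have := hN.to_subtype
  calc hContent α A ≤ ∑' y : N, ediam (closedEBall (y : X) ε) ^ α :=
        hContent_le_tsum α _ <| (isCover_iff_subset_iUnion_closedEBall.1 hcover).trans_eq
          (biUnion_eq_iUnion _ _)
    _ ≤ ∑' _ : N, (2 * ε : ℝ≥0∞) ^ α :=
        ENNReal.tsum_le_tsum fun _ ↦ ENNReal.rpow_le_rpow ediam_closedEBall_le hα
    _ = N.encard * (2 * ε : ℝ≥0∞) ^ α := ENNReal.tsum_const _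

section PseudoEMetricSpace

variable {X : Type*} [PseudoEMetricSpace X] {N : Set X}

theorem IsSeparated.pairwiseDisjoint_eball {r : ℝ≥0∞} (hN : IsSeparated (2 * r) N) :
    N.PairwiseDisjoint (eball · r) :=
  fun _ hx _ hy hxy ↦ eball_disjoint (two_mul r ▸ (hN hx hy hxy).le)

theorem IsSeparated.countable [TopologicalSpace.SeparableSpace X] {ε : ℝ≥0∞} (hε : ε ≠ 0)
    (hN : IsSeparated ε N) : N.Countable :=
  ((hN.anti ENNReal.mul_div_le).pairwiseDisjoint_eball).countable_of_isOpen
    (fun _ _ ↦ isOpen_eball) fun x _ ↦ ⟨x, mem_eball_self (ENNReal.half_pos hε)⟩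

end PseudoEMetricSpace

theorem IsSeparated.tsum_measure_ball_le {X : Type*} [PseudoMetricSpace X] [MeasurableSpace X]
    [OpensMeasurableSpace X] (μ : Measure X) {r : ℝ≥0} {A N : Set X} (hNA : N ⊆ A)
    (hN : N.Countable) (hsep : IsSeparated (2 * r : ℝ≥0) N) :
    ∑' y : N, μ (ball y r) ≤ μ (thickening r A) := by
  have hdisj : N.PairwiseDisjoint (ball · r) := by
    have := IsSeparated.pairwiseDisjoint_eball (r := r)
      (by simpa only [ENNReal.coe_mul, ENNReal.coe_ofNat] using hsep)
    simpa only [Metric.eball_coe] using this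
  calc ∑' y : N, μ (ball y r) = μ (⋃ y ∈ N, ball y r) :=
        (measure_biUnion hN hdisj fun _ _ ↦ measurableSet_ball).symm
    _ ≤ μ (thickening r A) := by
        rw [thickening_eq_biUnion_ball]
        exact measure_mono (biUnion_subset_biUnion_left hNA)

end Metric

theorem hContent_mul_le_rpow_mul_measure_thickening {X : Type*} [MetricSpace X]
    [TopologicalSpace.SeparableSpace X] [MeasurableSpace X] [OpensMeasurableSpace X]
    (μ : Measure X) {α : ℝ} (hα : 0 ≤ α) {δ : ℝ≥0} (hδ : δ ≠ 0) {m : ℝ≥0∞}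
    (hm : ∀ x, m ≤ μ (ball x δ)) (A : Set X) :
    hContent α A * m ≤ (4 * δ : ℝ≥0∞) ^ α * μ (thickening δ A) := by
  obtain ⟨N, hN⟩ :=
    exists_maximal_pairwise_subset (fun x y ↦ ((2 * δ : ℝ≥0) : ℝ≥0∞) < edist x y) A
  have hsep : IsSeparated (2 * δ : ℝ≥0) N := hN.prop.2
  have hcount : N.Countable := hsep.countable (by simpa using hδ)
  calc hContent α A * m ≤ N.encard * (2 * ((2 * δ : ℝ≥0) : ℝ≥0∞)) ^ α * m := by
        gcongr; exact (IsCover.of_maximal_isSeparated hN).hContent_le hα hcount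
    _ = (4 * δ : ℝ≥0∞) ^ α * ∑' _ : N, m := by
        rw [ENNReal.tsum_const, ENat.card_coe_set_eq,
          show 2 * ((2 * δ : ℝ≥0) : ℝ≥0∞) = 4 * δ by push_cast; ring]
        ring
    _ ≤ (4 * δ : ℝ≥0∞) ^ α * ∑' y : N, μ (ball (y : X) δ) := by
        gcongr with y; exact hm y
    _ ≤ (4 * δ : ℝ≥0∞) ^ α * μ (thickening δ A) := by
        gcongr; exact hsep.tsum_measure_ball_le μ hN.prop.1 hcount

theorem Real.mul_rpow_mul_rpow_sub {a δ : ℝ} (ha : 0 ≤ a) (hδ : 0 < δ) (α : ℝ) (n : ℕ) :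
    (a * δ) ^ α * δ ^ ((n : ℝ) - α) = a ^ α * δ ^ n := by
  rw [Real.mul_rpow ha hδ.le, mul_assoc, ← Real.rpow_add hδ, add_sub_cancel, Real.rpow_natCast]

theorem ENNReal.ofReal_div_rpow_mul_rpow_mul_ofReal_rpow_sub {a : ℝ≥0∞} (ha : a ≠ ⊤) {b α : ℝ}
    (hb : 0 < b) (hα : 0 ≤ α) {δ : ℝ≥0} (hδ : 0 < δ) (n : ℕ) :
    ENNReal.ofReal (a.toReal / b ^ α) * (ENNReal.ofReal b * δ) ^ α *
      ENNReal.ofReal (δ ^ ((n : ℝ) - α)) = ENNReal.ofReal (δ ^ n) * a := by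
  rw [← ENNReal.ofReal_coe_nnreal, ← ENNReal.ofReal_mul hb.le,
    ENNReal.ofReal_rpow_of_nonneg (by positivity) hα, ← ENNReal.ofReal_mul (by positivity),
    ← ENNReal.ofReal_mul (by positivity), mul_assoc,
    Real.mul_rpow_mul_rpow_sub hb.le (NNReal.coe_pos.2 hδ), ← ENNReal.ofReal_toReal ha,
    ← ENNReal.ofReal_mul (by positivity), ENNReal.ofReal_toReal ha]
  congr 1
  field_simp

theorem volume_thickening_ge_content_general
    (n : ℕ) (α : ℝ) (hα0 : 0 ≤ α) :
    ∃ c : ℝ, 0 < c ∧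
      ∀ (A : Set (EuclideanSpace ℝ (Fin n))) (δ : ℝ), 0 < δ →
        ENNReal.ofReal c * hContent α A * ENNReal.ofReal (δ ^ ((n : ℝ) - α)) ≤
          volume (Metric.thickening δ A) := by
  set vB := volume (ball (0 : EuclideanSpace ℝ (Fin n)) 1)
  have hvB : vB ≠ ⊤ := measure_ball_lt_top.ne
  have hvB_pos : 0 < vB.toReal := ENNReal.toReal_pos (measure_ball_pos _ _ one_pos).ne' hvB
  refine ⟨vB.toReal / 4 ^ α, by positivity, fun A δ hδ ↦ ?_⟩
  lift δ to ℝ≥0 using hδ.le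
  have key := hContent_mul_le_rpow_mul_measure_thickening volume hα0 (by exact_mod_cast hδ.ne')
    (m := ENNReal.ofReal (δ ^ n) * vB) (fun x ↦ by
      rw [Measure.addHaar_ball_of_pos volume x hδ, finrank_euclideanSpace_fin]) A
  have h4δ_top : (4 * δ : ℝ≥0∞) ≠ ⊤ := by finiteness
  refine (ENNReal.mul_le_mul_iff_right (ENNReal.rpow_pos (by simpa using hδ) h4δ_top).ne'
    (ENNReal.rpow_ne_top_of_nonneg hα0 h4δ_top)).1 ?_
  calc (4 * δ : ℝ≥0∞) ^ α * (ENNReal.ofReal (vB.toReal / 4 ^ α) * hContent α A *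
        ENNReal.ofReal (δ ^ ((n : ℝ) - α)))
      = hContent α A * (ENNReal.ofReal (vB.toReal / 4 ^ α) * (ENNReal.ofReal 4 * δ) ^ α *
        ENNReal.ofReal (δ ^ ((n : ℝ) - α))) := by rw [ENNReal.ofReal_ofNat]; ring
    _ = hContent α A * (ENNReal.ofReal (δ ^ n) * vB) := by
        rw [ENNReal.ofReal_div_rpow_mul_rpow_mul_ofReal_rpow_sub hvB four_pos hα0
          (NNReal.coe_pos.1 hδ)]
    _ ≤ _ := key

theorem volume_thickening_ge_content
    (n : ℕ) (hn : 1 ≤ n) (α : ℝ) (hα0 : 0 ≤ α) (hαn : α ≤ n) :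
    ∃ c : ℝ, 0 < c ∧
      ∀ (A : Set (EuclideanSpace ℝ (Fin n))) (δ : ℝ), 0 < δ →
        ENNReal.ofReal c * hContent α A * ENNReal.ofReal (δ ^ ((n : ℝ) - α)) ≤
          volume (Metric.thickening δ A) :=
  volume_thickening_ge_content_general n α hα0
end
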